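/- arXiv:1904.13125 — 6 statements merged into one kernel-verified Lean document; each statement's English description precedes it below -/
import Mathlib

section
/- Lower bound on the quasi-optimality constant by the smoother norm (Remark 2.1): if C ≥ 0 is such that the quasi-optimality estimate ‖u_ℓ − U_ℓ‖ ≤ C·inf_{s ∈ S} ‖u_ℓ − s‖ holds for every continuous linear functional ℓ on V, then ‖E‖ ≤ 1 + C. -/
/-!
Test the quasi-optimality estimate on the functional `ℓ = ⟪E σ, ·⟫` for a fixed `σ ∈ S`. Its
Riesz representative is `E σ` itself, whose distance to `S` is at most `‖E σ‖` since `0 ∈ S`;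
hence `‖U_ℓ‖ ≤ (1 + C) ‖E σ‖`. Testing the smoothed Galerkin equation with `σ` gives
`‖E σ‖² = ⟪U_ℓ, σ⟫ ≤ (1 + C) ‖E σ‖ ‖σ‖`, and cancelling `‖E σ‖` bounds `‖E σ‖ / ‖σ‖`.
-/

open scoped RealInnerProductSpace

section

variable {W : Type*} [NormedAddCommGroup W] [InnerProductSpace ℝ W]

theorem Submodule.infDist_le_norm (S : Submodule ℝ W) (x : W) :
    Metric.infDist x (S : Set W) ≤ ‖x‖ := by
  simpa using Metric.infDist_le_dist_of_mem (x := x) S.zero_mem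

theorem norm_le_of_norm_sub_le_mul_infDist (S : Submodule ℝ W) {u U : W} {C : ℝ} (hC : 0 ≤ C)
    (hqo : ‖u - U‖ ≤ C * Metric.infDist u (S : Set W)) :
    ‖U‖ ≤ (1 + C) * ‖u‖ :=
  calc ‖U‖ ≤ ‖u‖ + ‖u - U‖ := by simpa using norm_sub_le u (u - U)
    _ ≤ ‖u‖ + C * ‖u‖ := by gcongr; exact hqo.trans (by gcongr; exact S.infDist_le_norm u)
    _ = (1 + C) * ‖u‖ := by ring

end

theorem stmt_2_general {W : Type*} [NormedAddCommGroup W] [InnerProductSpace ℝ W]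
    (V S : Submodule ℝ W)
    (E : S →L[ℝ] V)
    (usol : (V →L[ℝ] ℝ) → V)
    (husol : ∀ (ℓ : V →L[ℝ] ℝ) (w : V), ⟪(usol ℓ : W), (w : W)⟫ = ℓ w)
    (Usol : (V →L[ℝ] ℝ) → S)
    (hUsol : ∀ (ℓ : V →L[ℝ] ℝ) (σ : S), ⟪(Usol ℓ : W), (σ : W)⟫ = ℓ (E σ))
    (C : ℝ) (hC : 0 ≤ C)
    (hqo : ∀ ℓ : V →L[ℝ] ℝ,
      ‖(usol ℓ : W) - (Usol ℓ : W)‖ ≤ C * Metric.infDist ((usol ℓ : W)) (S : Set W)) :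
    ‖E‖ ≤ 1 + C := by
  refine E.opNorm_le_bound (by positivity) fun σ => ?_
  set ℓ : V →L[ℝ] ℝ := innerSL ℝ (E σ)
  have hu : usol ℓ = E σ := ext_inner_right ℝ (husol ℓ)
  have hU : ‖Usol ℓ‖ ≤ (1 + C) * ‖E σ‖ := by
    simpa [hu] using norm_le_of_norm_sub_le_mul_infDist S hC (hqo ℓ)
  have hEσ : ‖E σ‖ * ‖E σ‖ ≤ ‖E σ‖ * ((1 + C) * ‖σ‖) :=
    calc ‖E σ‖ * ‖E σ‖ = ⟪(Usol ℓ : W), (σ : W)⟫ := by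
          rw [hUsol, innerSL_apply_apply, real_inner_self_eq_norm_mul_norm]
      _ ≤ ‖Usol ℓ‖ * ‖σ‖ := real_inner_le_norm _ _
      _ ≤ (1 + C) * ‖E σ‖ * ‖σ‖ := by gcongr
      _ = ‖E σ‖ * ((1 + C) * ‖σ‖) := by ring
  rcases (norm_nonneg (E σ)).eq_or_lt with h0 | hpos
  · rw [← h0]; positivity
  · exact le_of_mul_le_mul_left hEσ hpos

/-- Lower bound on the quasi-optimality constant by the smoother norm (Remark 2.1):
if `C ≥ 0` is such that `‖u_ℓ − U_ℓ‖ ≤ C * inf_{s ∈ S} ‖u_ℓ − s‖` for every continuous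
linear functional `ℓ` on `V`, then `‖E‖ ≤ 1 + C`. -/
theorem stmt_2 {W : Type*} [NormedAddCommGroup W] [InnerProductSpace ℝ W]
    (V S : Submodule ℝ W) (hV : IsComplete (V : Set W)) [FiniteDimensional ℝ S]
    (E : S →L[ℝ] V)
    (usol : (V →L[ℝ] ℝ) → V)
    (husol : ∀ (ℓ : V →L[ℝ] ℝ) (w : V), ⟪(usol ℓ : W), (w : W)⟫ = ℓ w)
    (Usol : (V →L[ℝ] ℝ) → S)
    (hUsol : ∀ (ℓ : V →L[ℝ] ℝ) (σ : S), ⟪(Usol ℓ : W), (σ : W)⟫ = ℓ (E σ))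
    (C : ℝ) (hC : 0 ≤ C)
    (hqo : ∀ ℓ : V →L[ℝ] ℝ,
      ‖(usol ℓ : W) - (Usol ℓ : W)‖ ≤ C * Metric.infDist ((usol ℓ : W)) (S : Set W)) :
    ‖E‖ ≤ 1 + C :=
  stmt_2_general V S E usol husol Usol hUsol C hC hqo
end

section
/- Necessity of algebraic consistency for quasi-optimality (eq. (2.5), necessity direction): if there exists a constant C ≥ 0 such that ‖u_ℓ − U_ℓ‖ ≤ C·inf_{s ∈ S} ‖u_ℓ − s‖ for every continuous linear functional ℓ on V, then ⟨s, Eσ⟩ = ⟨s, σ⟩ for every s ∈ V ∩ S and every σ ∈ S. -/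
open scoped RealInnerProductSpace

/- Test the quasi-optimality bound with the functional `ℓ = ⟪s, ·⟫` for `s ∈ V ∩ S`: its Riesz
representative is `u_ℓ = s ∈ S`, so the best-approximation error vanishes, hence `U_ℓ = s`, and the
defining equation of `U_ℓ` then reads `⟪s, σ⟫ = ⟪s, Eσ⟫`. -/

theorem Submodule.eq_of_forall_inner_eq {𝕜 W : Type*} [RCLike 𝕜] [NormedAddCommGroup W]
    [InnerProductSpace 𝕜 W] {V : Submodule 𝕜 W} {u s : W} (hu : u ∈ V) (hs : s ∈ V)
    (h : ∀ w ∈ V, inner 𝕜 u w = inner 𝕜 s w) : u = s := by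
  have := ext_inner_right 𝕜 (x := (⟨u, hu⟩ : V)) (y := ⟨s, hs⟩) fun w => h w w.2
  exact congrArg Subtype.val this

theorem eq_of_norm_sub_le_mul_infDist {W : Type*} [NormedAddCommGroup W] {S : Set W}
    {u U : W} {C : ℝ} (hu : u ∈ S) (h : ‖u - U‖ ≤ C * Metric.infDist u S) : U = u := by
  rw [Metric.infDist_zero_of_mem hu, mul_zero, norm_le_zero_iff, sub_eq_zero] at h
  exact h.symm

theorem stmt_3_general {W : Type*} [NormedAddCommGroup W] [InnerProductSpace ℝ W]
    (V S : Submodule ℝ W)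
    (E : S →L[ℝ] V)
    (usol : (V →L[ℝ] ℝ) → V)
    (husol : ∀ (ℓ : V →L[ℝ] ℝ) (w : V), ⟪(usol ℓ : W), (w : W)⟫ = ℓ w)
    (Usol : (V →L[ℝ] ℝ) → S)
    (hUsol : ∀ (ℓ : V →L[ℝ] ℝ) (σ : S), ⟪(Usol ℓ : W), (σ : W)⟫ = ℓ (E σ))
    (C : ℝ)
    (hqo : ∀ ℓ : V →L[ℝ] ℝ,
      ‖(usol ℓ : W) - (Usol ℓ : W)‖ ≤ C * Metric.infDist ((usol ℓ : W)) (S : Set W)) :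
    ∀ s : W, s ∈ V → s ∈ S → ∀ σ : S, ⟪s, ((E σ : V) : W)⟫ = ⟪s, (σ : W)⟫ := by
  intro s hsV hsS σ
  let ℓ : V →L[ℝ] ℝ := (innerSL ℝ s).comp V.subtypeL
  have hu : (usol ℓ : W) = s :=
    Submodule.eq_of_forall_inner_eq (usol ℓ).2 hsV fun w hw => husol ℓ ⟨w, hw⟩
  have hU : (Usol ℓ : W) = s := by
    rw [← hu] at hsS ⊢
    exact eq_of_norm_sub_le_mul_infDist hsS (hqo ℓ)
  simpa [hU, ℓ] using (hUsol ℓ σ).symm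

/-- Necessity of algebraic consistency for quasi-optimality (eq. (2.5), necessity direction):
if there is `C ≥ 0` with `‖u_ℓ − U_ℓ‖ ≤ C * inf_{s ∈ S} ‖u_ℓ − s‖` for every continuous linear
functional `ℓ` on `V`, then `⟪s, Eσ⟫ = ⟪s, σ⟫` for every `s ∈ V ∩ S` and every `σ ∈ S`. -/
theorem stmt_3 {W : Type*} [NormedAddCommGroup W] [InnerProductSpace ℝ W]
    (V S : Submodule ℝ W) (hV : IsComplete (V : Set W)) [FiniteDimensional ℝ S]
    (E : S →L[ℝ] V)
    (usol : (V →L[ℝ] ℝ) → V)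
    (husol : ∀ (ℓ : V →L[ℝ] ℝ) (w : V), ⟪(usol ℓ : W), (w : W)⟫ = ℓ w)
    (Usol : (V →L[ℝ] ℝ) → S)
    (hUsol : ∀ (ℓ : V →L[ℝ] ℝ) (σ : S), ⟪(Usol ℓ : W), (σ : W)⟫ = ℓ (E σ))
    (C : ℝ) (hC : 0 ≤ C)
    (hqo : ∀ ℓ : V →L[ℝ] ℝ,
      ‖(usol ℓ : W) - (Usol ℓ : W)‖ ≤ C * Metric.infDist ((usol ℓ : W)) (S : Set W)) :
    ∀ s : W, s ∈ V → s ∈ S → ∀ σ : S, ⟪s, ((E σ : V) : W)⟫ = ⟪s, (σ : W)⟫ :=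
  stmt_3_general V S E usol husol Usol hUsol C hqo
end

section
/- Equivalence of the consistency conditions (abstract form of Lemma 4.4): let u ∈ V and U ∈ S satisfy b(U, σ) = b(u, Eσ) for all σ ∈ S. Then the following three conditions are equivalent: (a) u ∈ Ẑ implies b(u − U, u − U) = 0; (b) u ∈ Ẑ implies U = Pu; (c) u ∈ Ẑ implies b(u, σ − Eσ) = 0 for all σ ∈ S. -/
/-!
Since `b (u - p) σ = 0` for every `σ ∈ S`, Pythagoras gives
`b (u - s) (u - s) = b (u - p) (u - p) + b (p - s) (p - s)` for `s ∈ S`, so `p` minimises the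
distance to `S` and `u ∈ Ẑ` means exactly `b (u - p) (u - p) = 0`. Then (a) says that
`b (p - U) (p - U) = 0`, which is (b) because `b` is definite on `S`. On the other hand
`b (p - U) σ = b u (σ - E σ)`, and `p - U` vanishes iff it is `b`-orthogonal to all of `S`,
which is (b) ⇔ (c).
-/

section

variable {W : Type*} [AddCommGroup W] [Module ℝ W] {b : W →ₗ[ℝ] W →ₗ[ℝ] ℝ}

theorem apply_add_self_of_apply_eq_zero (hsymm : ∀ x y : W, b x y = b y x) {x y : W}
    (h : b x y = 0) : b (x + y) (x + y) = b x x + b y y := by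
  simp only [map_add, LinearMap.add_apply, hsymm y x, h]
  ring

theorem Submodule.eq_of_apply_sub_self_eq_zero {S : Submodule ℝ W}
    (hpd : ∀ s : S, s ≠ 0 → 0 < b (s : W) (s : W)) {s t : S}
    (h : b ((s : W) - t) ((s : W) - t) = 0) : s = t := by
  by_contra hne
  have hpos := hpd (s - t) (sub_ne_zero.mpr hne)
  rw [Submodule.coe_sub, h] at hpos
  exact lt_irrefl 0 hpos

variable {S : Submodule ℝ W} {u : W} {p : S}

theorem apply_sub_self_eq_add_of_forall_apply_eq (hsymm : ∀ x y : W, b x y = b y x)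
    (hp : ∀ σ : S, b (p : W) (σ : W) = b u (σ : W)) (s : S) :
    b (u - s) (u - s) = b (u - p) (u - p) + b ((p : W) - s) ((p : W) - s) := by
  have horth : b (u - p) ((p : W) - s) = 0 := by
    rw [← Submodule.coe_sub, map_sub, LinearMap.sub_apply, hp, sub_self]
  rw [← apply_add_self_of_apply_eq_zero hsymm horth, sub_add_sub_cancel]

theorem sInf_apply_sub_self_eq_of_forall_apply_eq (hsymm : ∀ x y : W, b x y = b y x)
    (hpsd : ∀ x : W, 0 ≤ b x x) (hp : ∀ σ : S, b (p : W) (σ : W) = b u (σ : W)) :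
    sInf {r : ℝ | ∃ s : S, r = b (u - (s : W)) (u - (s : W))} = b (u - p) (u - p) := by
  refine IsLeast.csInf_eq ⟨⟨p, rfl⟩, ?_⟩
  rintro r ⟨s, rfl⟩
  rw [apply_sub_self_eq_add_of_forall_apply_eq hsymm hp s]
  exact le_add_of_nonneg_right (hpsd _)

end

theorem stmt_7_general {W : Type*} [AddCommGroup W] [Module ℝ W]
    (b : W →ₗ[ℝ] W →ₗ[ℝ] ℝ)
    (hsymm : ∀ x y : W, b x y = b y x)
    (hpsd : ∀ x : W, 0 ≤ b x x)
    (V S : Submodule ℝ W)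
    (hpd : ∀ s : S, s ≠ 0 → 0 < b (s : W) (s : W))
    (E : S →ₗ[ℝ] V)
    (u : W)
    (U : S) (hU : ∀ σ : S, b (U : W) (σ : W) = b u ((E σ : V) : W))
    (p : S) (hp : ∀ σ : S, b (p : W) (σ : W) = b u (σ : W)) :
    ((sInf {r : ℝ | ∃ s : S, r = b (u - (s : W)) (u - (s : W))} = 0 →
        b (u - (U : W)) (u - (U : W)) = 0) ↔
      (sInf {r : ℝ | ∃ s : S, r = b (u - (s : W)) (u - (s : W))} = 0 → U = p)) ∧
    ((sInf {r : ℝ | ∃ s : S, r = b (u - (s : W)) (u - (s : W))} = 0 → U = p) ↔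
      (sInf {r : ℝ | ∃ s : S, r = b (u - (s : W)) (u - (s : W))} = 0 →
        ∀ σ : S, b u ((σ : W) - ((E σ : V) : W)) = 0)) := by
  rw [sInf_apply_sub_self_eq_of_forall_apply_eq hsymm hpsd hp]
  have hpyth := apply_sub_self_eq_add_of_forall_apply_eq hsymm hp U
  have hdiff : ∀ σ : S, b ((p : W) - U) σ = b u ((σ : W) - ((E σ : V) : W)) := by
    intro σ
    simp only [map_sub, LinearMap.sub_apply, hp, hU]
  refine ⟨imp_congr_right fun hZ => ⟨fun ha => ?_, ?_⟩, imp_congr_right fun _ => ⟨?_, ?_⟩⟩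
  · refine (Submodule.eq_of_apply_sub_self_eq_zero hpd ?_).symm
    linarith [hpsd ((p : W) - U)]
  · rintro rfl
    exact hZ
  · rintro rfl σ
    rw [← hdiff, sub_self, map_zero, LinearMap.zero_apply]
  · intro hc
    refine (Submodule.eq_of_apply_sub_self_eq_zero hpd ?_).symm
    exact_mod_cast (hdiff (p - U)).trans (hc (p - U))

/-- Equivalence of the consistency conditions (abstract form of Lemma 4.4): let `u ∈ V` and
`U ∈ S` satisfy `b U σ = b u (E σ)` for all `σ ∈ S`. Then the following are equivalent:
(a) `u ∈ Ẑ → b (u − U) (u − U) = 0`; (b) `u ∈ Ẑ → U = Pu`;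
(c) `u ∈ Ẑ → ∀ σ ∈ S, b u (σ − E σ) = 0`. -/
theorem stmt_7 {W : Type*} [AddCommGroup W] [Module ℝ W]
    (b : W →ₗ[ℝ] W →ₗ[ℝ] ℝ)
    (hsymm : ∀ x y : W, b x y = b y x)
    (hpsd : ∀ x : W, 0 ≤ b x x)
    (V S : Submodule ℝ W) [FiniteDimensional ℝ S]
    (hpd : ∀ s : S, s ≠ 0 → 0 < b (s : W) (s : W))
    (E : S →ₗ[ℝ] V)
    (u : W) (hu : u ∈ V)
    (U : S) (hU : ∀ σ : S, b (U : W) (σ : W) = b u ((E σ : V) : W))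
    (p : S) (hp : ∀ σ : S, b (p : W) (σ : W) = b u (σ : W)) :
    ((sInf {r : ℝ | ∃ s : S, r = b (u - (s : W)) (u - (s : W))} = 0 →
        b (u - (U : W)) (u - (U : W)) = 0) ↔
      (sInf {r : ℝ | ∃ s : S, r = b (u - (s : W)) (u - (s : W))} = 0 → U = p)) ∧
    ((sInf {r : ℝ | ∃ s : S, r = b (u - (s : W)) (u - (s : W))} = 0 → U = p) ↔
      (sInf {r : ℝ | ∃ s : S, r = b (u - (s : W)) (u - (s : W))} = 0 →
        ∀ σ : S, b u ((σ : W) - ((E σ : V) : W)) = 0)) :=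
  stmt_7_general b hsymm hpsd V S hpd E u U hU p hp
end

section
/- Consistency via the moment-preservation identity (abstract form of the final conclusion of Lemma 4.5): assume the smoother satisfies ã(s, σ − Eσ) = st(s, σ) for all s, σ ∈ S (eq. (26)). Then for every u ∈ Ẑ and every σ ∈ S one has ã(u, Eσ) = ã(u, σ); in particular, every u ∈ Ẑ satisfies the algebraic consistency conditions (23). -/
lemma cs_aux {W : Type*} [AddCommGroup W] [Module ℝ W]
    (B : W →ₗ[ℝ] W →ₗ[ℝ] ℝ) (hsymm : ∀ x y : W, B x y = B y x)
    (hpsd : ∀ x : W, 0 ≤ B x x) (x y : W) : (B x y)^2 ≤ B x x * B y y := by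
  have h : ∀ t : ℝ, 0 ≤ B y y * (t * t) + (2 * B x y) * t + B x x := by
    intro t
    have h0 := hpsd (x + t • y)
    simp only [map_add, map_smul, LinearMap.add_apply, LinearMap.smul_apply,
      smul_eq_mul] at h0
    rw [hsymm y x] at h0
    ring_nf at h0 ⊢
    linarith [h0]
  have hd := discrim_le_zero h
  rw [discrim] at hd
  nlinarith [hd]

set_option maxHeartbeats 1000000 in
/-- Consistency via the moment-preservation identity (abstract form of Lemma 4.5): if the
smoother satisfies `ã(s, σ − Eσ) = st(s, σ)` for all `s, σ ∈ S`, then for every `u ∈ Ẑ` and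
every `σ ∈ S` one has `ã(u, Eσ) = ã(u, σ)` (with `ã = c + st`). -/
theorem stmt_8 {W : Type*} [AddCommGroup W] [Module ℝ W]
    (V S : Submodule ℝ W) [FiniteDimensional ℝ S]
    (c st : W →ₗ[ℝ] W →ₗ[ℝ] ℝ)
    (hcsymm : ∀ x y : W, c x y = c y x) (hcpsd : ∀ x : W, 0 ≤ c x x)
    (hstsymm : ∀ x y : W, st x y = st y x) (hstpsd : ∀ x : W, 0 ≤ st x x)
    (hstV : ∀ x y : W, x ∈ V ∨ y ∈ V → st x y = 0)
    (hpd : ∀ s : S, s ≠ 0 → 0 < c (s : W) (s : W) + st (s : W) (s : W))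
    (E : S →ₗ[ℝ] V)
    (h26 : ∀ s σ : S,
      c (s : W) ((σ : W) - ((E σ : V) : W)) + st (s : W) ((σ : W) - ((E σ : V) : W)) =
        st (s : W) (σ : W))
    (u : W) (hu : u ∈ V)
    (hZ : sInf {r : ℝ | ∃ s : S,
        r = c (u - (s : W)) (u - (s : W)) + st (u - (s : W)) (u - (s : W))} = 0) :
    ∀ σ : S, c u ((E σ : V) : W) + st u ((E σ : V) : W) = c u (σ : W) + st u (σ : W) := by
  intro σ
  obtain ⟨a, ha⟩ : ∃ a : W →ₗ[ℝ] W →ₗ[ℝ] ℝ, a = c + st := ⟨_, rfl⟩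
  have haapp : ∀ x y : W, a x y = c x y + st x y := by intro x y; simp [ha]
  have hasymm : ∀ x y : W, a x y = a y x := by
    intro x y; rw [haapp, haapp, hcsymm, hstsymm]
  have hapsd : ∀ x : W, 0 ≤ a x x := by
    intro x; rw [haapp]; exact add_nonneg (hcpsd x) (hstpsd x)
  have hstu : ∀ w : W, st u w = 0 := fun w => hstV u w (Or.inl hu)
  obtain ⟨d, hdd⟩ : ∃ d : W, d = (σ : W) - ((E σ : V) : W) := ⟨_, rfl⟩
  obtain ⟨t, ht⟩ : ∃ t : ℝ, t = a u d := ⟨_, rfl⟩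
  obtain ⟨M, hM⟩ : ∃ M : ℝ, M = a d d := ⟨_, rfl⟩
  obtain ⟨N, hN⟩ : ∃ N : ℝ, N = st (σ : W) (σ : W) := ⟨_, rfl⟩
  have hM0 : 0 ≤ M := hM ▸ hapsd d
  have hN0 : 0 ≤ N := hN ▸ hstpsd _
  obtain ⟨C, hC⟩ : ∃ C : ℝ, C = Real.sqrt M + Real.sqrt N := ⟨_, rfl⟩
  have hC0 : 0 ≤ C := hC ▸ add_nonneg (Real.sqrt_nonneg _) (Real.sqrt_nonneg _)
  -- key estimate
  have hkey : ∀ s : S, t ^ 2 ≤ (a (u - (s : W)) (u - (s : W))) * C ^ 2 := by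
    intro s
    obtain ⟨ε, hε⟩ : ∃ ε : ℝ, ε = a (u - (s : W)) (u - (s : W)) := ⟨_, rfl⟩
    have hε0 : 0 ≤ ε := hε ▸ hapsd _
    obtain ⟨A, hA⟩ : ∃ A : ℝ, A = a (u - (s : W)) d := ⟨_, rfl⟩
    obtain ⟨B, hB⟩ : ∃ B : ℝ, B = st ((s : W) - u) (σ : W) := ⟨_, rfl⟩
    have htAB : t = A + B := by
      have h1 : a ((s : W)) d = st ((s : W)) (σ : W) := by
        rw [haapp, hdd]; exact h26 s σ
      have h2 : B = st ((s : W)) (σ : W) := by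
        rw [hB, map_sub, LinearMap.sub_apply, hstu (σ : W)]; ring
      have h3 : A = a u d - a ((s : W)) d := by
        rw [hA, map_sub, LinearMap.sub_apply]
      rw [ht, h3, h2, h1]; ring
    have hA2 : A ^ 2 ≤ ε * M := by
      have hcs := cs_aux a hasymm hapsd (u - (s : W)) d
      rw [← hA, ← hε, ← hM] at hcs
      exact hcs
    have habsA : |A| ≤ Real.sqrt ε * Real.sqrt M := by
      rw [← Real.sqrt_sq_eq_abs, ← Real.sqrt_mul hε0]
      exact Real.sqrt_le_sqrt hA2
    have hB2 : B ^ 2 ≤ ε * N := by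
      have hcs := cs_aux st hstsymm hstpsd ((s : W) - u) (σ : W)
      rw [← hB, ← hN] at hcs
      have hneg : st ((s : W) - u) ((s : W) - u) = st (u - (s : W)) (u - (s : W)) := by
        rw [← neg_sub u ((s : W))]
        simp only [map_neg, LinearMap.neg_apply, neg_neg]
      have hle : st ((s : W) - u) ((s : W) - u) ≤ ε := by
        rw [hneg, hε, haapp]
        have := hcpsd (u - (s : W))
        linarith
      calc B ^ 2 ≤ st ((s : W) - u) ((s : W) - u) * N := hcs
        _ ≤ ε * N := mul_le_mul_of_nonneg_right hle hN0
    have habsB : |B| ≤ Real.sqrt ε * Real.sqrt N := by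
      rw [← Real.sqrt_sq_eq_abs, ← Real.sqrt_mul hε0]
      exact Real.sqrt_le_sqrt hB2
    have habst : |t| ≤ Real.sqrt ε * C := by
      calc |t| = |A + B| := by rw [htAB]
        _ ≤ |A| + |B| := abs_add_le _ _
        _ ≤ Real.sqrt ε * Real.sqrt M + Real.sqrt ε * Real.sqrt N := add_le_add habsA habsB
        _ = Real.sqrt ε * C := by rw [hC]; ring
    have hsq : t ^ 2 ≤ (Real.sqrt ε * C) ^ 2 := by
      rw [← sq_abs t]
      exact pow_le_pow_left₀ (abs_nonneg t) habst 2
    have : t ^ 2 ≤ ε * C ^ 2 := by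
      rw [mul_pow, Real.sq_sqrt hε0] at hsq
      exact hsq
    rw [← hε]
    exact this
  -- conclude t = 0
  have ht0 : t = 0 := by
    rcases eq_or_lt_of_le hC0 with hCz | hCp
    · -- C = 0 : then M = 0 and t^2 ≤ a u u * M = 0
      have hsum : Real.sqrt M + Real.sqrt N = 0 := by rw [← hC]; exact hCz.symm
      have h1 : Real.sqrt M = 0 := by
        have := Real.sqrt_nonneg M
        have := Real.sqrt_nonneg N
        linarith
      have hMz : M = 0 := by
        have h2 := Real.sq_sqrt hM0
        rw [h1] at h2
        simpa using h2.symm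
      have hcs := cs_aux a hasymm hapsd u d
      rw [← ht, ← hM] at hcs
      rw [hMz, mul_zero] at hcs
      nlinarith [sq_nonneg t]
    · -- C > 0
      have hC2 : 0 < C ^ 2 := by positivity
      have hne : {r : ℝ | ∃ s : S,
          r = c (u - (s : W)) (u - (s : W)) + st (u - (s : W)) (u - (s : W))}.Nonempty :=
        ⟨_, ⟨0, rfl⟩⟩
      have hlb : ∀ r ∈ {r : ℝ | ∃ s : S,
          r = c (u - (s : W)) (u - (s : W)) + st (u - (s : W)) (u - (s : W))},
          t ^ 2 / C ^ 2 ≤ r := by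
        rintro r ⟨s, rfl⟩
        have h1 := hkey s
        rw [haapp] at h1
        rw [div_le_iff₀ hC2]
        linarith
      have hinf := le_csInf hne hlb
      rw [hZ] at hinf
      have h2 : t ^ 2 ≤ 0 := by
        rw [div_nonpos_iff] at hinf
        rcases hinf with ⟨_, h⟩ | ⟨h, _⟩
        · linarith
        · exact h
      nlinarith [sq_nonneg t]
  -- unfold
  have hexp : t = (c u (σ : W) + st u (σ : W)) -
      (c u ((E σ : V) : W) + st u ((E σ : V) : W)) := by
    rw [ht, haapp, hdd, map_sub, map_sub]
    ring
  rw [hexp] at ht0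
  linarith
end

section
/- Key identity in the proof of Proposition 4.6: assume ã(s, σ − Eσ) = st(s, σ) for all s, σ ∈ S (eq. (26)). If u ∈ V and U ∈ S satisfy ã(U, σ) = ã(u, Eσ) for all σ ∈ S, then for every σ ∈ S one has ã(U − Pu, σ) = c(u − Pu, Eσ − σ), where Pu ∈ S is the unique element with ã(Pu, τ) = ã(u, τ) for all τ ∈ S. -/
/-!
Because `st` vanishes as soon as one argument lies in `V`, eq. (26) says exactly that `Eσ − σ`
is `c`-orthogonal to `S`, and `ã(u, ·) = c(u, ·)` for `u ∈ V`. Subtracting the equations defining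
`U` and `Pu` gives `ã(U − Pu, σ) = c(u, Eσ − σ)`, and the orthogonality lets us replace `u` by
`u − Pu`.
-/

section SmoothedBilinearForms

variable {W : Type*} [AddCommGroup W] [Module ℝ W] {V : Submodule ℝ W}
  (c st : W →ₗ[ℝ] W →ₗ[ℝ] ℝ)

theorem apply_sub_eq_zero_of_stab_eq (hstV : ∀ x y : W, x ∈ V ∨ y ∈ V → st x y = 0)
    {s σ e : W} (he : e ∈ V) (h : c s (σ - e) + st s (σ - e) = st s σ) :
    c s (e - σ) = 0 := by
  have hse : st s e = 0 := hstV s e (.inr he)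
  simp only [map_sub] at h ⊢
  linarith

end SmoothedBilinearForms

theorem stmt_10_general {W : Type*} [AddCommGroup W] [Module ℝ W]
    (V S : Submodule ℝ W)
    (c st : W →ₗ[ℝ] W →ₗ[ℝ] ℝ)
    (hstV : ∀ x y : W, x ∈ V ∨ y ∈ V → st x y = 0)
    (E : S →ₗ[ℝ] V)
    (h26 : ∀ s σ : S,
      c (s : W) ((σ : W) - ((E σ : V) : W)) + st (s : W) ((σ : W) - ((E σ : V) : W)) =
        st (s : W) (σ : W))
    (u : W) (hu : u ∈ V)
    (U : S) (hU : ∀ σ : S,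
      c (U : W) (σ : W) + st (U : W) (σ : W) =
        c u ((E σ : V) : W) + st u ((E σ : V) : W))
    (p : S) (hp : ∀ τ : S,
      c (p : W) (τ : W) + st (p : W) (τ : W) = c u (τ : W) + st u (τ : W)) :
    ∀ σ : S,
      c ((U : W) - (p : W)) (σ : W) + st ((U : W) - (p : W)) (σ : W) =
        c (u - (p : W)) (((E σ : V) : W) - (σ : W)) := by
  intro σ
  have hp_orth : c p ((E σ : W) - σ) = 0 :=
    apply_sub_eq_zero_of_stab_eq c st hstV (E σ).2 (h26 p σ)
  have hu_st : ∀ w, st u w = 0 := fun w => hstV u w (.inl hu)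
  calc c ((U : W) - p) σ + st ((U : W) - p) σ
      = (c U σ + st U σ) - (c p σ + st p σ) := by
        simp only [map_sub, LinearMap.sub_apply]; ring
    _ = (c u (E σ : W) + st u (E σ : W)) - (c u σ + st u σ) := by rw [hU, hp]
    _ = c u ((E σ : W) - σ) := by rw [hu_st, hu_st, map_sub]; ring
    _ = c u ((E σ : W) - σ) - c p ((E σ : W) - σ) := by rw [hp_orth, sub_zero]
    _ = c (u - p) ((E σ : W) - σ) := by rw [map_sub c, LinearMap.sub_apply]

/-- Key identity in the proof of Proposition 4.6: under eq. (26), if `ã(U, σ) = ã(u, Eσ)` for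
all `σ ∈ S`, then `ã(U − Pu, σ) = c(u − Pu, Eσ − σ)` for every `σ ∈ S`, where `Pu ∈ S` is the
unique element with `ã(Pu, τ) = ã(u, τ)` for all `τ ∈ S`. -/
theorem stmt_10 {W : Type*} [AddCommGroup W] [Module ℝ W]
    (V S : Submodule ℝ W) [FiniteDimensional ℝ S]
    (c st : W →ₗ[ℝ] W →ₗ[ℝ] ℝ)
    (hcsymm : ∀ x y : W, c x y = c y x) (hcpsd : ∀ x : W, 0 ≤ c x x)
    (hstsymm : ∀ x y : W, st x y = st y x) (hstpsd : ∀ x : W, 0 ≤ st x x)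
    (hstV : ∀ x y : W, x ∈ V ∨ y ∈ V → st x y = 0)
    (hpd : ∀ s : S, s ≠ 0 → 0 < c (s : W) (s : W) + st (s : W) (s : W))
    (E : S →ₗ[ℝ] V)
    (h26 : ∀ s σ : S,
      c (s : W) ((σ : W) - ((E σ : V) : W)) + st (s : W) ((σ : W) - ((E σ : V) : W)) =
        st (s : W) (σ : W))
    (u : W) (hu : u ∈ V)
    (U : S) (hU : ∀ σ : S,
      c (U : W) (σ : W) + st (U : W) (σ : W) =
        c u ((E σ : V) : W) + st u ((E σ : V) : W))
    (p : S) (hp : ∀ τ : S,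
      c (p : W) (τ : W) + st (p : W) (τ : W) = c u (τ : W) + st u (τ : W)) :
    ∀ σ : S,
      c ((U : W) - (p : W)) (σ : W) + st ((U : W) - (p : W)) (σ : W) =
        c (u - (p : W)) (((E σ : V) : W) - (σ : W)) :=
  stmt_10_general V S c st hstV E h26 u hu U hU p hp
end

section
/- Bound on the discrete deviation from the projection (final estimate in the proof of Proposition 4.6): assume ã(s, σ − Eσ) = st(s, σ) for all s, σ ∈ S (eq. (26)), and let C_H ≥ 0 satisfy c(σ − Eσ, σ − Eσ) ≤ C_H²·ã(σ, σ) for all σ ∈ S (eq. (28)). If u ∈ V and U ∈ S satisfy ã(U, σ) = ã(u, Eσ) for all σ ∈ S, then ã(U − Pu, U − Pu) ≤ C_H²·ã(u − Pu, u − Pu), where Pu ∈ S is the unique element with ã(Pu, τ) = ã(u, τ) for all τ ∈ S. -/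
/-!
Write `e = U - Pu`. Both `U` and `Pu` are defined by Galerkin-type equations for `u ∈ V`,
on which `st` vanishes, so `ã(e, σ) = c(u, Eσ - σ)`. Eq. (26) says exactly that
`c(S, σ - Eσ) = 0`, so `u` may be replaced by `u - Pu`, giving `ã(e, e) = c(u - Pu, Ee - e)`.
Cauchy–Schwarz for `c` together with (28) then yields
`ã(e, e)² ≤ c(u - Pu, u - Pu) · C_H² ã(e, e)`.
-/

lemma le_of_sq_le_mul {R : Type*} [CommRing R] [LinearOrder R] [IsStrictOrderedRing R]
    {a b : R} (hb : 0 ≤ b) (h : a ^ 2 ≤ b * a) : a ≤ b := by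
  nlinarith

namespace LinearMap.BilinForm

variable {R M : Type*} [CommRing R] [LinearOrder R] [IsStrictOrderedRing R]
  [AddCommGroup M] [Module R M]

lemma apply_le_mul_apply_self_of_apply_self_le (B : LinearMap.BilinForm R M)
    (hs : ∀ x, 0 ≤ B x x) (hB : LinearMap.IsSymm B) {κ : R} (hκ : 0 ≤ κ) {x y : M}
    (h : B y y ≤ κ * B x y) :
    B x y ≤ κ * B x x :=
  le_of_sq_le_mul (mul_nonneg hκ (hs x)) <| calc
    B x y ^ 2 ≤ B x x * B y y := B.apply_sq_le_of_symm hs hB x y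
    _ ≤ B x x * (κ * B x y) := by gcongr; exact hs x
    _ = κ * B x x * B x y := by ring

end LinearMap.BilinForm

section Smoother

variable {W : Type*} [AddCommGroup W] [Module ℝ W] {V S : Submodule ℝ W}
  {c st : W →ₗ[ℝ] W →ₗ[ℝ] ℝ} {E : S →ₗ[ℝ] V}

lemma apply_sub_smoother_eq_zero (hstV : ∀ x y : W, x ∈ V ∨ y ∈ V → st x y = 0)
    (h26 : ∀ s σ : S,
      c (s : W) ((σ : W) - ((E σ : V) : W)) + st (s : W) ((σ : W) - ((E σ : V) : W)) =
        st (s : W) (σ : W))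
    (s σ : S) : c (s : W) ((σ : W) - ((E σ : V) : W)) = 0 := by
  have h := h26 s σ
  rw [map_sub (st (s : W)), hstV _ _ (Or.inr (E σ).2)] at h
  linarith

lemma extForm_sub_apply_eq (hstV : ∀ x y : W, x ∈ V ∨ y ∈ V → st x y = 0)
    {u : W} (hu : u ∈ V) {U p : S}
    (hU : ∀ σ : S,
      c (U : W) (σ : W) + st (U : W) (σ : W) = c u ((E σ : V) : W) + st u ((E σ : V) : W))
    (hp : ∀ τ : S, c (p : W) (τ : W) + st (p : W) (τ : W) = c u (τ : W) + st u (τ : W))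
    (σ : S) :
    c ((U : W) - (p : W)) (σ : W) + st ((U : W) - (p : W)) (σ : W) =
      c u (((E σ : V) : W) - (σ : W)) := by
  have hstu : ∀ y, st u y = 0 := fun y => hstV u y (Or.inl hu)
  have hUσ := hU σ
  have hpσ := hp σ
  rw [hstu] at hUσ hpσ
  simp only [map_sub, LinearMap.sub_apply]
  linarith

lemma extForm_sub_self_eq (hstV : ∀ x y : W, x ∈ V ∨ y ∈ V → st x y = 0)
    (h26 : ∀ s σ : S,
      c (s : W) ((σ : W) - ((E σ : V) : W)) + st (s : W) ((σ : W) - ((E σ : V) : W)) =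
        st (s : W) (σ : W))
    {u : W} (hu : u ∈ V) {U p : S}
    (hU : ∀ σ : S,
      c (U : W) (σ : W) + st (U : W) (σ : W) = c u ((E σ : V) : W) + st u ((E σ : V) : W))
    (hp : ∀ τ : S, c (p : W) (τ : W) + st (p : W) (τ : W) = c u (τ : W) + st u (τ : W)) :
    c ((U : W) - (p : W)) ((U : W) - (p : W)) + st ((U : W) - (p : W)) ((U : W) - (p : W)) =
      c (u - (p : W)) (((E (U - p) : V) : W) - ((U : W) - (p : W))) := by
  have h := extForm_sub_apply_eq hstV hu hU hp (U - p)
  have hc := apply_sub_smoother_eq_zero hstV h26 p (U - p)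
  rw [Submodule.coe_sub] at h hc
  rw [h, map_sub c u, LinearMap.sub_apply, ← neg_sub ((U : W) - (p : W)), map_neg (c (p : W)), hc,
    neg_zero, sub_zero]

end Smoother

theorem stmt_12_general {W : Type*} [AddCommGroup W] [Module ℝ W]
    (V S : Submodule ℝ W)
    (c st : W →ₗ[ℝ] W →ₗ[ℝ] ℝ)
    (hcsymm : ∀ x y : W, c x y = c y x) (hcpsd : ∀ x : W, 0 ≤ c x x)
    (hstpsd : ∀ x : W, 0 ≤ st x x)
    (hstV : ∀ x y : W, x ∈ V ∨ y ∈ V → st x y = 0)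
    (E : S →ₗ[ℝ] V)
    (h26 : ∀ s σ : S,
      c (s : W) ((σ : W) - ((E σ : V) : W)) + st (s : W) ((σ : W) - ((E σ : V) : W)) =
        st (s : W) (σ : W))
    (CH : ℝ)
    (h28 : ∀ σ : S,
      c ((σ : W) - ((E σ : V) : W)) ((σ : W) - ((E σ : V) : W)) ≤
        CH ^ 2 * (c (σ : W) (σ : W) + st (σ : W) (σ : W)))
    (u : W) (hu : u ∈ V)
    (U : S) (hU : ∀ σ : S,
      c (U : W) (σ : W) + st (U : W) (σ : W) =
        c u ((E σ : V) : W) + st u ((E σ : V) : W))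
    (p : S) (hp : ∀ τ : S,
      c (p : W) (τ : W) + st (p : W) (τ : W) = c u (τ : W) + st u (τ : W)) :
    c ((U : W) - (p : W)) ((U : W) - (p : W)) + st ((U : W) - (p : W)) ((U : W) - (p : W)) ≤
      CH ^ 2 * (c (u - (p : W)) (u - (p : W)) + st (u - (p : W)) (u - (p : W))) := by
  have hkey := extForm_sub_self_eq hstV h26 hu hU hp
  set d : W := ((E (U - p) : V) : W) - ((U : W) - (p : W))
  have hd : c d d ≤ CH ^ 2 * c (u - (p : W)) d := by
    have h := h28 (U - p)
    rw [Submodule.coe_sub, ← neg_sub ((E (U - p) : V) : W), hkey] at h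
    simpa only [map_neg, LinearMap.neg_apply, neg_neg] using h
  rw [hkey]
  calc c (u - (p : W)) d
      ≤ CH ^ 2 * c (u - (p : W)) (u - (p : W)) :=
        LinearMap.BilinForm.apply_le_mul_apply_self_of_apply_self_le c hcpsd ⟨hcsymm⟩
          (sq_nonneg CH) hd
    _ ≤ CH ^ 2 * (c (u - (p : W)) (u - (p : W)) + st (u - (p : W)) (u - (p : W))) := by
        gcongr
        exact le_add_of_nonneg_right (hstpsd _)

/-- Bound on the discrete deviation from the projection (final estimate in the proof of
Proposition 4.6): under eq. (26) and the bound (28) with constant `C_H ≥ 0`, if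
`ã(U, σ) = ã(u, Eσ)` for all `σ ∈ S`, then `ã(U − Pu, U − Pu) ≤ C_H² * ã(u − Pu, u − Pu)`,
where `Pu ∈ S` is the unique element with `ã(Pu, τ) = ã(u, τ)` for all `τ ∈ S`. -/
theorem stmt_12 {W : Type*} [AddCommGroup W] [Module ℝ W]
    (V S : Submodule ℝ W) [FiniteDimensional ℝ S]
    (c st : W →ₗ[ℝ] W →ₗ[ℝ] ℝ)
    (hcsymm : ∀ x y : W, c x y = c y x) (hcpsd : ∀ x : W, 0 ≤ c x x)
    (hstsymm : ∀ x y : W, st x y = st y x) (hstpsd : ∀ x : W, 0 ≤ st x x)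
    (hstV : ∀ x y : W, x ∈ V ∨ y ∈ V → st x y = 0)
    (hpd : ∀ s : S, s ≠ 0 → 0 < c (s : W) (s : W) + st (s : W) (s : W))
    (E : S →ₗ[ℝ] V)
    (h26 : ∀ s σ : S,
      c (s : W) ((σ : W) - ((E σ : V) : W)) + st (s : W) ((σ : W) - ((E σ : V) : W)) =
        st (s : W) (σ : W))
    (CH : ℝ) (hCH : 0 ≤ CH)
    (h28 : ∀ σ : S,
      c ((σ : W) - ((E σ : V) : W)) ((σ : W) - ((E σ : V) : W)) ≤
        CH ^ 2 * (c (σ : W) (σ : W) + st (σ : W) (σ : W)))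
    (u : W) (hu : u ∈ V)
    (U : S) (hU : ∀ σ : S,
      c (U : W) (σ : W) + st (U : W) (σ : W) =
        c u ((E σ : V) : W) + st u ((E σ : V) : W))
    (p : S) (hp : ∀ τ : S,
      c (p : W) (τ : W) + st (p : W) (τ : W) = c u (τ : W) + st u (τ : W)) :
    c ((U : W) - (p : W)) ((U : W) - (p : W)) + st ((U : W) - (p : W)) ((U : W) - (p : W)) ≤
      CH ^ 2 * (c (u - (p : W)) (u - (p : W)) + st (u - (p : W)) (u - (p : W))) :=
  stmt_12_general V S c st hcsymm hcpsd hstpsd hstV E h26 CH h28 u hu U hU p hp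
end
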